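/- Let R = R(m_0,2,0) be the Lie algebra with basis {x, y, e_1, e_2, ...} and nonzero brackets [e_i, e_1] = e_{i+1} (i ≥ 2), [e_1, x] = e_1, [e_i, x] = (i-1)e_i (i ≥ 2), [e_i, y] = e_i (i ≥ 2), with antisymmetric counterparts and [x,y] = 0. Then the center of R is trivial and every derivation of R is inner. -/

import Mathlib

/-!
Right multiplication by `x` and by `y` is diagonal in the basis, with eigenvalue pairs `(1, 0)`
on `e_1` and `(i - 1, 1)` on `e_i` for `i ≥ 2`; these separate the `e_i` from one another and
from `span {x, y}`. Hence a central element has no `e_i`-components, and its brackets with `e_1`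
and `e_2` kill its `x`- and `y`-parts. For a derivation `d`, the Leibniz rule on the pairs
`(x, y)`, `(e_i, x)`, `(e_i, y)` and `(e_i, e_1)` determines `d` on the basis from `d x` and the
diagonal entries of `d` at `e_1` and `e_2` (the diagonal entry at `e_i` is affine in `i`, by
induction along `[e_i, e_1] = e_{i+1}`). These data are matched by `ad a`, where the
`e_i`-coefficients of `a` are those of `d x` divided by the `x`-eigenvalue of `e_i`.
-/

noncomputable section

/-- The underlying space; coordinate 0 is `x`, coordinate 1 is `y`, and
coordinate `n ≥ 2` is the basis vector `e_{n-1}` (so `e_i = single (i+1)`). -/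
abbrev V : Type := ℕ →₀ ℂ

/-- `e_i ↦ e_{i+1}` for `i ≥ 2` (`single n ↦ single (n+1)` for `n ≥ 3`), else 0. -/
def T : V →ₗ[ℂ] V :=
  Finsupp.lsum ℂ fun n => if 3 ≤ n then (Finsupp.lsingle (n + 1) : ℂ →ₗ[ℂ] V) else 0

/-- Right multiplication by `x`: `e_1 ↦ e_1`, `e_i ↦ (i-1) e_i` for `i ≥ 2`. -/
def A : V →ₗ[ℂ] V :=
  Finsupp.lsum ℂ fun n =>
    (if n = 2 then (1 : ℂ) else if 3 ≤ n then (n : ℂ) - 2 else 0) • Finsupp.lsingle n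

/-- Right multiplication by `y`: `e_i ↦ e_i` for `i ≥ 2`, else 0. -/
def B : V →ₗ[ℂ] V :=
  Finsupp.lsum ℂ fun n => if 3 ≤ n then (Finsupp.lsingle n : ℂ →ₗ[ℂ] V) else 0

/-- Lie bracket of `R(m₀,2,0)`: nonzero brackets `[e_i,e_1] = e_{i+1}` (i ≥ 2),
`[e_1,x] = e_1`, `[e_i,x] = (i-1)e_i` (i ≥ 2), `[e_i,y] = e_i` (i ≥ 2), with
antisymmetric counterparts, and `[x,y] = 0`. -/
def brR (f g : V) : V :=
  g 2 • T f - f 2 • T g + g 0 • A f - f 0 • A g + g 1 • B f - f 1 • B g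

open Finsupp

def xWeight (k : ℕ) : ℂ := if k = 2 then 1 else if 3 ≤ k then (k : ℂ) - 2 else 0

lemma T_single_of_three_le {n : ℕ} (hn : 3 ≤ n) (c : ℂ) :
    T (single n c) = single (n + 1) c := by
  simp [T, hn]

lemma T_single_of_lt_three {n : ℕ} (hn : n < 3) (c : ℂ) : T (single n c) = 0 := by
  simp [T, Nat.not_le.2 hn]

lemma A_single (n : ℕ) (c : ℂ) : A (single n c) = xWeight n • single n c := by
  simp only [A, lsum_single, LinearMap.smul_apply, lsingle_apply, xWeight]

lemma B_single_of_three_le {n : ℕ} (hn : 3 ≤ n) (c : ℂ) : B (single n c) = single n c := by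
  simp [B, hn]

lemma B_single_of_lt_three {n : ℕ} (hn : n < 3) (c : ℂ) : B (single n c) = 0 := by
  simp [B, Nat.not_le.2 hn]

lemma T_apply (g : V) (k : ℕ) : T g k = if 4 ≤ k then g (k - 1) else 0 := by
  induction g using Finsupp.induction_linear with
  | zero => simp
  | add f g hf hg => rw [map_add, Finsupp.add_apply, hf, hg]; split_ifs <;> simp
  | single n c =>
    rcases Nat.lt_or_ge n 3 with hn | hn
    · rw [T_single_of_lt_three hn]; grind
    · rw [T_single_of_three_le hn]; grind

lemma A_apply (g : V) (k : ℕ) : A g k = xWeight k * g k := by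
  induction g using Finsupp.induction_linear with
  | zero => simp
  | add f g hf hg => rw [map_add, Finsupp.add_apply, hf, hg, Finsupp.add_apply, mul_add]
  | single n c => rw [A_single]; by_cases h : n = k <;> simp [h]

lemma B_apply (g : V) (k : ℕ) : B g k = if 3 ≤ k then g k else 0 := by
  induction g using Finsupp.induction_linear with
  | zero => simp
  | add f g hf hg => rw [map_add, Finsupp.add_apply, hf, hg]; split_ifs <;> simp
  | single n c =>
    rcases Nat.lt_or_ge n 3 with hn | hn
    · rw [B_single_of_lt_three hn]; grind
    · rw [B_single_of_three_le hn]; grind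

lemma xWeight_of_three_le {k : ℕ} (hk : 3 ≤ k) : xWeight k = k - 2 := by
  simp [xWeight, hk, show k ≠ 2 by omega]

lemma natCast_sub_two_ne_zero {k : ℕ} (hk : 3 ≤ k) : (k : ℂ) - 2 ≠ 0 := by
  rw [sub_ne_zero]
  exact_mod_cast (show k ≠ 2 by omega)

lemma xWeight_ne_zero {k : ℕ} (hk : 2 ≤ k) : xWeight k ≠ 0 := by
  rcases hk.eq_or_lt with rfl | hk
  · simp [xWeight]
  · exact xWeight_of_three_le hk ▸ natCast_sub_two_ne_zero hk

lemma xWeight_ne_natCast_sub_two {k n : ℕ} (hn : 3 ≤ n) (hk : k ≠ 2) (hkn : k ≠ n) :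
    xWeight k ≠ n - 2 := by
  unfold xWeight
  rw [if_neg hk]
  split_ifs
  · rw [Ne, sub_left_inj]; exact_mod_cast hkn
  · rw [Ne, eq_comm, sub_eq_zero]; exact_mod_cast (show n ≠ 2 by omega)

lemma brR_antisymm (f g : V) : brR f g = -brR g f := by
  simp only [brR]; abel

lemma brR_single_zero (f : V) : brR f (single 0 1) = A f := by
  simp [brR, T_single_of_lt_three, B_single_of_lt_three, A_single, xWeight]

lemma brR_single_one (f : V) : brR f (single 1 1) = B f := by
  simp [brR, T_single_of_lt_three, B_single_of_lt_three, A_single, xWeight]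

lemma brR_single_two (f : V) : brR f (single 2 1) = T f - f 0 • single 2 1 := by
  simp [brR, T_single_of_lt_three, B_single_of_lt_three, A_single, xWeight]

lemma brR_single_of_three_le {n : ℕ} (hn : 3 ≤ n) (f : V) :
    brR f (single n 1) = -(f 2 • single (n + 1) 1) - ((n - 2) * f 0 + f 1) • single n 1 := by
  rw [brR, single_eq_of_ne (by omega), single_eq_of_ne (by omega), single_eq_of_ne (by omega),
    T_single_of_three_le hn, A_single, B_single_of_three_le hn, xWeight_of_three_le hn]
  module

lemma brR_single_zero_single_one : brR (single 0 1) (single 1 1) = 0 := by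
  rw [brR_single_one, B_single_of_lt_three (by norm_num)]

lemma brR_single_two_single_zero : brR (single 2 1) (single 0 1) = single 2 1 := by
  simp [brR_single_zero, A_single, xWeight]

lemma brR_single_two_single_one : brR (single 2 1) (single 1 1) = 0 := by
  rw [brR_single_one, B_single_of_lt_three (by norm_num)]

lemma brR_single_single_zero {n : ℕ} (hn : 3 ≤ n) :
    brR (single n 1) (single 0 1) = ((n : ℂ) - 2) • single n 1 := by
  rw [brR_single_zero, A_single, xWeight_of_three_le hn]

lemma brR_single_single_one {n : ℕ} (hn : 3 ≤ n) :
    brR (single n 1) (single 1 1) = single n 1 := by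
  rw [brR_single_one, B_single_of_three_le hn]

lemma brR_single_single_two {n : ℕ} (hn : 3 ≤ n) :
    brR (single n 1) (single 2 1) = single (n + 1) 1 := by
  simp [brR_single_two, T_single_of_three_le hn, show n ≠ 0 by omega]

theorem eq_zero_of_forall_brR_eq_zero (z : V) (hz : ∀ w, brR z w = 0) : z = 0 := by
  have h_high (k : ℕ) (hk : 2 ≤ k) : z k = 0 := by
    have h := congr($(hz (single 0 1)) k)
    rw [brR_single_zero, A_apply, Finsupp.zero_apply] at h
    exact (mul_eq_zero.1 h).resolve_left (xWeight_ne_zero hk)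
  have h0 : z 0 = 0 := by
    simpa [brR_single_two, T_apply] using congr($(hz (single 2 1)) 2)
  have h1 : z 1 = 0 := by
    simpa [brR_single_of_three_le le_rfl, h0] using congr($(hz (single 3 1)) 3)
  ext (_ | _ | k)
  · exact h0
  · exact h1
  · exact h_high (k + 2) (by omega)

def ad (a : V) : V →ₗ[ℂ] V where
  toFun := brR a
  map_add' f g := by simp only [brR, coe_add, Pi.add_apply, map_add, smul_add, add_smul]; abel
  map_smul' c f := by
    simp only [brR, map_smul, coe_smul, Pi.smul_apply, smul_eq_mul, mul_smul, RingHom.id_apply]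
    module

lemma ad_apply (a v : V) : ad a v = brR a v := rfl

-- `xWeight` vanishes at the `x`- and `y`-coordinates, so (as `0⁻¹ = 0`) so does `divXWeight f`.
def divXWeight (f : V) : V :=
  onFinset f.support (fun k => (xWeight k)⁻¹ * f k) fun _ hk =>
    mem_support_iff.2 (right_ne_zero_of_mul hk)

def innerElement (d : V →ₗ[ℂ] V) : V :=
  single 0 (-d (single 2 1) 2) + single 1 (d (single 2 1) 2 - d (single 3 1) 3) +
    divXWeight (d (single 0 1))

lemma innerElement_apply_zero (d : V →ₗ[ℂ] V) : innerElement d 0 = -d (single 2 1) 2 := by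
  simp [innerElement, divXWeight, xWeight]

lemma innerElement_apply_one (d : V →ₗ[ℂ] V) :
    innerElement d 1 = d (single 2 1) 2 - d (single 3 1) 3 := by
  simp [innerElement, divXWeight, xWeight]

lemma innerElement_apply_of_two_le (d : V →ₗ[ℂ] V) {k : ℕ} (hk : 2 ≤ k) :
    innerElement d k = (xWeight k)⁻¹ * d (single 0 1) k := by
  simp [innerElement, divXWeight, show 0 ≠ k by omega, show 1 ≠ k by omega]

def IsDerivation (d : V →ₗ[ℂ] V) : Prop :=
  ∀ u v : V, d (brR u v) = brR (d u) v + brR u (d v)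

namespace IsDerivation

variable {d : V →ₗ[ℂ] V} (hd : IsDerivation d)
include hd

lemma map_brR_single (i j : ℕ) : d (brR (single i 1) (single j 1)) =
    brR (d (single i 1)) (single j 1) - brR (d (single j 1)) (single i 1) := by
  rw [hd, brR_antisymm (single i 1), sub_eq_add_neg]

lemma single_zero_apply_of_three_le {k : ℕ} (hk : 3 ≤ k) :
    d (single 0 1) k = (k - 2) * d (single 1 1) k := by
  have h := congr($(hd.map_brR_single 0 1) k)
  rw [brR_single_zero_single_one] at h
  simpa [brR_single_zero, brR_single_one, A_apply, B_apply, hk, xWeight_of_three_le hk,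
    sub_eq_zero] using h.symm

lemma single_one_apply_two : d (single 1 1) 2 = 0 := by
  have h := congr($(hd.map_brR_single 0 1) 2)
  rw [brR_single_zero_single_one] at h
  simpa [brR_single_zero, brR_single_one, A_apply, B_apply, xWeight] using h

lemma single_zero_apply_zero : d (single 0 1) 0 = 0 := by
  have h := congr($(hd.map_brR_single 2 0) 2)
  rw [brR_single_two_single_zero] at h
  simpa [brR_single_zero, brR_single_two, A_apply, T_apply, xWeight] using h

lemma single_two_apply_of_lt_two {k : ℕ} (hk : k < 2) : d (single 2 1) k = 0 := by
  have h := congr($(hd.map_brR_single 2 0) k)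
  rw [brR_single_two_single_zero] at h
  simpa [brR_single_zero, brR_single_two, A_apply, T_apply, xWeight, single_apply,
    show k ≠ 2 by omega, show ¬3 ≤ k by omega, show ¬4 ≤ k by omega] using h

lemma single_one_apply_zero : d (single 1 1) 0 = 0 := by
  have h := congr($(hd.map_brR_single 2 1) 2)
  rw [brR_single_two_single_one] at h
  simpa [brR_single_one, brR_single_two, B_apply, T_apply] using h.symm

lemma single_two_apply_three : d (single 2 1) 3 = 0 := by
  have h := congr($(hd.map_brR_single 2 1) 3)
  rw [brR_single_two_single_one] at h
  simpa [brR_single_one, brR_single_two, B_apply, T_apply] using h.symm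

lemma single_two_apply_of_four_le {k : ℕ} (hk : 4 ≤ k) :
    d (single 2 1) k = d (single 1 1) (k - 1) := by
  have h := congr($(hd.map_brR_single 2 1) k)
  rw [brR_single_two_single_one] at h
  simpa [brR_single_one, brR_single_two, B_apply, T_apply, hk, show 3 ≤ k by omega,
    show 2 ≠ k by omega, sub_eq_zero] using h.symm

lemma single_zero_apply_one : d (single 0 1) 1 = 0 := by
  have h := congr($(hd.map_brR_single 3 0) 3)
  rw [brR_single_single_zero le_rfl, map_smul] at h
  simpa [brR_single_zero, brR_single_of_three_le le_rfl, A_apply, xWeight,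
    hd.single_zero_apply_zero] using h

lemma single_one_apply_one : d (single 1 1) 1 = 0 := by
  have h := congr($(hd.map_brR_single 3 1) 3)
  rw [brR_single_single_one le_rfl] at h
  simpa [brR_single_one, brR_single_of_three_le le_rfl, B_apply, hd.single_one_apply_zero] using h

section

variable {n : ℕ} (hn : 3 ≤ n)
include hn

lemma single_apply_of_ne {k : ℕ} (hkn : k ≠ n) (hkn' : k ≠ n + 1) : d (single n 1) k = 0 := by
  by_cases hk2 : k = 2
  · -- `e_1` and `e_2` have the same `x`-weight, so the coordinate of `e_1` needs `y`.
    subst hk2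
    have h := congr($(hd.map_brR_single n 1) 2)
    rw [brR_single_single_one hn] at h
    simpa [brR_single_one, brR_single_of_three_le hn, B_apply, single_apply,
      show n ≠ 1 by omega, Ne.symm hkn] using h
  · have h := congr($(hd.map_brR_single n 0) k)
    rw [brR_single_single_zero hn, map_smul] at h
    simp [brR_single_zero, brR_single_of_three_le hn, A_apply, Ne.symm hkn,
      show n + 1 ≠ k by omega] at h
    exact h.resolve_left (xWeight_ne_natCast_sub_two hn hk2 hkn).symm

lemma single_apply_succ : d (single n 1) (n + 1) = -d (single 0 1) 2 := by
  have h := congr($(hd.map_brR_single n 0) (n + 1))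
  rw [brR_single_single_zero hn, map_smul] at h
  simp [brR_single_zero, brR_single_of_three_le hn, A_apply,
    xWeight_of_three_le (show 3 ≤ n + 1 by omega)] at h
  linear_combination -h

lemma single_apply_self : d (single n 1) n = d (single 3 1) 3 + (n - 3) * d (single 2 1) 2 := by
  induction n, hn using Nat.le_induction with
  | base => norm_num
  | succ n hn ih =>
    have h := congr($(hd.map_brR_single n 2) (n + 1))
    rw [brR_single_single_two hn] at h
    simp [brR_single_two, brR_single_of_three_le hn, T_apply, show 4 ≤ n + 1 by omega,
      show 2 ≠ n + 1 by omega] at h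
    push_cast
    linear_combination h + ih

end

lemma innerElement_apply_of_three_le {k : ℕ} (hk : 3 ≤ k) :
    innerElement d k = d (single 1 1) k := by
  rw [innerElement_apply_of_two_le d (by omega), hd.single_zero_apply_of_three_le hk,
    xWeight_of_three_le hk, inv_mul_cancel_left₀ (natCast_sub_two_ne_zero hk)]

lemma map_single_zero : d (single 0 1) = ad (innerElement d) (single 0 1) := by
  ext k
  rw [ad_apply, brR_single_zero, A_apply]
  rcases Nat.lt_or_ge k 2 with hk | hk
  · interval_cases k
    · simp [xWeight, hd.single_zero_apply_zero]
    · simp [xWeight, hd.single_zero_apply_one]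
  · rw [innerElement_apply_of_two_le d hk, mul_inv_cancel_left₀ (xWeight_ne_zero hk)]

lemma map_single_one : d (single 1 1) = ad (innerElement d) (single 1 1) := by
  ext k
  rw [ad_apply, brR_single_one, B_apply]
  rcases Nat.lt_or_ge k 3 with hk | hk
  · interval_cases k
    · simp [hd.single_one_apply_zero]
    · simp [hd.single_one_apply_one]
    · simp [hd.single_one_apply_two]
  · rw [if_pos hk, hd.innerElement_apply_of_three_le hk]

lemma map_single_two : d (single 2 1) = ad (innerElement d) (single 2 1) := by
  ext k
  rw [ad_apply, brR_single_two, Finsupp.sub_apply, T_apply, Finsupp.smul_apply, single_apply]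
  rcases Nat.lt_or_ge k 4 with hk | hk
  · interval_cases k
    · simp [hd.single_two_apply_of_lt_two]
    · simp [hd.single_two_apply_of_lt_two]
    · simp [innerElement_apply_zero]
    · simp [hd.single_two_apply_three]
  · rw [if_pos hk, if_neg (by omega), hd.single_two_apply_of_four_le hk,
      hd.innerElement_apply_of_three_le (by omega), smul_zero, sub_zero]

lemma map_single_of_three_le {n : ℕ} (hn : 3 ≤ n) :
    d (single n 1) = ad (innerElement d) (single n 1) := by
  ext k
  rw [ad_apply, brR_single_of_three_le hn]
  simp only [Finsupp.sub_apply, Finsupp.neg_apply, Finsupp.smul_apply, single_apply, smul_eq_mul]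
  by_cases hk : n + 1 = k
  · subst hk
    simp [hd.single_apply_succ hn, innerElement_apply_of_two_le d le_rfl, xWeight]
  by_cases hk' : n = k
  · subst hk'
    rw [if_neg (by omega), if_pos rfl, hd.single_apply_self hn, innerElement_apply_zero,
      innerElement_apply_one]
    ring
  · simp [hk, hk', hd.single_apply_of_ne hn (Ne.symm hk') (Ne.symm hk)]

theorem eq_ad_innerElement : d = ad (innerElement d) := by
  refine Finsupp.basisSingleOne.ext fun n => ?_
  rw [coe_basisSingleOne]
  rcases Nat.lt_or_ge n 3 with hn | hn
  · interval_cases n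
    exacts [hd.map_single_zero, hd.map_single_one, hd.map_single_two]
  · exact hd.map_single_of_three_le hn

end IsDerivation

/-- `R(m₀,2,0)` has trivial center and all its derivations are inner. -/
theorem stmt16 :
    (∀ z : V, (∀ w : V, brR z w = 0) → z = 0) ∧
    (∀ d : V →ₗ[ℂ] V, (∀ u v : V, d (brR u v) = brR (d u) v + brR u (d v)) →
      ∃ a : V, ∀ v : V, d v = brR a v) :=
  ⟨eq_zero_of_forall_brR_eq_zero, fun d hd =>
    ⟨innerElement d, fun v => LinearMap.congr_fun (IsDerivation.eq_ad_innerElement hd) v⟩⟩
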